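/- arXiv:2003.06855 — 4 statements merged into one kernel-verified Lean document; each statement's English description precedes it below -/
import Mathlib

section
/- Let S(λ) be a differentiable family of 2n×2n real symplectic matrices, and let P₃ = diag(-I, I). Then Ψ(S(λ)) ≥ 0 for all λ if and only if Ψ(P₃ S(λ)⁻¹ P₃) ≥ 0 for all λ, where Ψ(Z(λ)) := Jᵀ Z'(λ) Z(λ)⁻¹. In particular, Ψ(P₃ S(λ)⁻¹ P₃) = -P₃ Ψ(S(λ)⁻¹) P₃. -/
/-!
Differentiating `S S⁻¹ = I` gives `(S⁻¹)' = -S⁻¹ S' S⁻¹`, and the symplectic relation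
`Jᵀ S⁻¹ = Sᵀ Jᵀ` turns this into `Ψ(S⁻¹) = -Sᵀ Ψ(S) S`. Since `P₃` anticommutes with `J`,
conjugating by `P₃` flips the sign of `Ψ`, so `Ψ(P₃ S⁻¹ P₃) = (S P₃)ᵀ Ψ(S) (S P₃)`: a congruence
by an invertible matrix, which preserves positive semidefiniteness in both directions.
-/

open Matrix
noncomputable section

/-- The standard symplectic matrix `J = [[0, I], [-I, 0]]`. -/
def Jmat (k : Type*) [Fintype k] [DecidableEq k] : Matrix (k ⊕ k) (k ⊕ k) ℝ :=
  fromBlocks 0 1 (-1) 0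

/-- A matrix `S` is symplectic if `Sᵀ J S = J`. -/
def IsSymplectic {k : Type*} [Fintype k] [DecidableEq k]
    (S : Matrix (k ⊕ k) (k ⊕ k) ℝ) : Prop :=
  Sᵀ * Jmat k * S = Jmat k

/-- `S'` is the (entrywise) derivative family of the matrix family `S`. -/
def HasMatDeriv {k m : Type*} (S S' : ℝ → Matrix k m ℝ) : Prop :=
  ∀ (l : ℝ) (i : k) (j : m), HasDerivAt (fun t => S t i j) (S' l i j) l

/-- `Ψ(S(λ)) = Jᵀ S'(λ) S(λ)⁻¹`, where `S'` is a derivative family of `S`. -/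
def Psi {k : Type*} [Fintype k] [DecidableEq k]
    (S S' : ℝ → Matrix (k ⊕ k) (k ⊕ k) ℝ) (l : ℝ) : Matrix (k ⊕ k) (k ⊕ k) ℝ :=
  (Jmat k)ᵀ * S' l * (S l)⁻¹

/-- The block diagonal matrix `P₃ = diag(-I, I)`. -/
def P3mat (k : Type*) [Fintype k] [DecidableEq k] : Matrix (k ⊕ k) (k ⊕ k) ℝ :=
  fromBlocks (-1) 0 0 1

section Symplectic

variable {k : Type*} [Fintype k] [DecidableEq k]

lemma Jmat_mul_Jmat : Jmat k * Jmat k = -1 := by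
  simp only [Jmat, fromBlocks_multiply, fromBlocks_neg, ← fromBlocks_one]
  norm_num

lemma Jmat_transpose : (Jmat k)ᵀ = -Jmat k := by
  simp only [Jmat, fromBlocks_transpose, fromBlocks_neg, transpose_zero, transpose_one,
    transpose_neg]
  norm_num

lemma P3mat_mul_P3mat : P3mat k * P3mat k = 1 := by
  simp [P3mat, fromBlocks_multiply, ← fromBlocks_one]

lemma P3mat_transpose : (P3mat k)ᵀ = P3mat k := by
  simp [P3mat, fromBlocks_transpose]

lemma P3mat_inv : (P3mat k)⁻¹ = P3mat k := inv_eq_left_inv P3mat_mul_P3mat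

lemma transpose_Jmat_mul_P3mat : (Jmat k)ᵀ * P3mat k = -(P3mat k * (Jmat k)ᵀ) := by
  rw [Jmat_transpose]
  simp only [Jmat, P3mat, fromBlocks_neg, fromBlocks_multiply]
  norm_num

namespace IsSymplectic

variable {S : Matrix (k ⊕ k) (k ⊕ k) ℝ}

lemma isUnit_det (h : IsSymplectic S) : IsUnit S.det :=
  isUnit_det_of_left_inverse (B := -(Jmat k * Sᵀ * Jmat k)) <| by
    calc -(Jmat k * Sᵀ * Jmat k) * S = -(Jmat k * (Sᵀ * Jmat k * S)) := by
          simp only [neg_mul, Matrix.mul_assoc]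
      _ = 1 := by rw [h, Jmat_mul_Jmat, neg_neg]

lemma transpose_Jmat_mul_inv (h : IsSymplectic S) : (Jmat k)ᵀ * S⁻¹ = Sᵀ * (Jmat k)ᵀ := by
  have hJ : Sᵀ * Jmat k = Jmat k * S⁻¹ := by
    calc Sᵀ * Jmat k = Sᵀ * Jmat k * S * S⁻¹ := by
          rw [Matrix.mul_assoc _ S, mul_nonsing_inv _ h.isUnit_det, Matrix.mul_one]
      _ = Jmat k * S⁻¹ := by rw [h]
  rw [Jmat_transpose, neg_mul, mul_neg, hJ]

end IsSymplectic

end Symplectic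

namespace HasMatDeriv

variable {k m p : Type*}

lemma unique {A A₁' A₂' : ℝ → Matrix k m ℝ} (h₁ : HasMatDeriv A A₁') (h₂ : HasMatDeriv A A₂') :
    A₁' = A₂' :=
  funext fun l => Matrix.ext fun i j => (h₁ l i j).unique (h₂ l i j)

lemma mul [Fintype m] {A A' : ℝ → Matrix k m ℝ} {B B' : ℝ → Matrix m p ℝ}
    (hA : HasMatDeriv A A') (hB : HasMatDeriv B B') :
    HasMatDeriv (fun t => A t * B t) (fun t => A' t * B t + A t * B' t) := by
  intro l i j
  simpa only [mul_apply, Matrix.add_apply, ← Finset.sum_add_distrib] using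
    HasDerivAt.fun_sum (u := Finset.univ) fun a _ => (hA l i a).fun_mul (hB l a j)

lemma const_mul_mul {q : Type*} [Fintype m] [Fintype p] (C : Matrix k m ℝ) (D : Matrix p q ℝ)
    {A A' : ℝ → Matrix m p ℝ} (h : HasMatDeriv A A') :
    HasMatDeriv (fun t => C * A t * D) (fun t => C * A' t * D) := by
  intro l i j
  simpa only [mul_apply] using HasDerivAt.fun_sum fun b _ =>
    (HasDerivAt.fun_sum fun a _ => (h l a b).const_mul (C i a)).mul_const (D b j)

lemma deriv_inv_eq [Fintype k] [DecidableEq k] {S S' Si' : ℝ → Matrix k k ℝ}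
    (hd : HasMatDeriv S S') (hS : ∀ t, IsUnit (S t).det)
    (hdi : HasMatDeriv (fun t => (S t)⁻¹) Si') :
    Si' = fun t => -((S t)⁻¹ * S' t * (S t)⁻¹) := by
  have hconst : HasMatDeriv (fun t => S t * (S t)⁻¹) (fun _ => 0) := by
    simp only [fun t => mul_nonsing_inv _ (hS t)]
    exact fun l i j => hasDerivAt_const l _
  funext l
  have hsum : S' l * (S l)⁻¹ + S l * Si' l = 0 := congrFun ((hd.mul hdi).unique hconst) l
  calc Si' l = (S l)⁻¹ * (S l * Si' l) := by
        rw [← Matrix.mul_assoc, nonsing_inv_mul _ (hS l), Matrix.one_mul]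
    _ = -((S l)⁻¹ * S' l * (S l)⁻¹) := by
        rw [eq_neg_of_add_eq_zero_right hsum, mul_neg, Matrix.mul_assoc]

end HasMatDeriv

section Psi

variable {k : Type*} [Fintype k] [DecidableEq k]

lemma Psi_conj_P3mat (A A' : ℝ → Matrix (k ⊕ k) (k ⊕ k) ℝ) (l : ℝ) :
    Psi (fun t => P3mat k * A t * P3mat k) (fun t => P3mat k * A' t * P3mat k) l
      = -(P3mat k * Psi A A' l * P3mat k) := by
  simp only [Psi, Matrix.mul_inv_rev, P3mat_inv]
  calc (Jmat k)ᵀ * (P3mat k * A' l * P3mat k) * (P3mat k * ((A l)⁻¹ * P3mat k))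
      = (Jmat k)ᵀ * P3mat k * A' l * (P3mat k * P3mat k) * (A l)⁻¹ * P3mat k := by
        simp only [Matrix.mul_assoc]
    _ = -(P3mat k * ((Jmat k)ᵀ * A' l * (A l)⁻¹) * P3mat k) := by
        rw [transpose_Jmat_mul_P3mat, P3mat_mul_P3mat]
        simp only [neg_mul, Matrix.mul_one, Matrix.mul_assoc]

lemma Psi_inv_of_isSymplectic {S S' : ℝ → Matrix (k ⊕ k) (k ⊕ k) ℝ}
    (hS : ∀ t, IsSymplectic (S t)) (l : ℝ) :
    Psi (fun t => (S t)⁻¹) (fun t => -((S t)⁻¹ * S' t * (S t)⁻¹)) l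
      = -((S l)ᵀ * Psi S S' l * S l) := by
  simp only [Psi, nonsing_inv_nonsing_inv _ (hS l).isUnit_det]
  calc (Jmat k)ᵀ * -((S l)⁻¹ * S' l * (S l)⁻¹) * S l
      = -((Jmat k)ᵀ * (S l)⁻¹ * S' l * (S l)⁻¹ * S l) := by
        simp only [mul_neg, neg_mul, Matrix.mul_assoc]
    _ = -((S l)ᵀ * ((Jmat k)ᵀ * S' l * (S l)⁻¹) * S l) := by
        rw [(hS l).transpose_Jmat_mul_inv]
        simp only [Matrix.mul_assoc]

lemma Psi_P3mat_conj_inv_of_isSymplectic {S S' : ℝ → Matrix (k ⊕ k) (k ⊕ k) ℝ}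
    (hS : ∀ t, IsSymplectic (S t)) (l : ℝ) :
    Psi (fun t => P3mat k * (S t)⁻¹ * P3mat k)
        (fun t => P3mat k * -((S t)⁻¹ * S' t * (S t)⁻¹) * P3mat k) l
      = star (S l * P3mat k) * Psi S S' l * (S l * P3mat k) := by
  rw [Psi_conj_P3mat (fun t => (S t)⁻¹), Psi_inv_of_isSymplectic hS, star_eq_conjTranspose,
    conjTranspose_eq_transpose_of_trivial, transpose_mul, P3mat_transpose]
  simp only [mul_neg, neg_mul, neg_neg, Matrix.mul_assoc]

end Psi

/-- `Ψ(S(λ)) ≥ 0` for all `λ` iff `Ψ(P₃ S(λ)⁻¹ P₃) ≥ 0` for all `λ`;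
moreover `Ψ(P₃ S(λ)⁻¹ P₃) = -P₃ Ψ(S(λ)⁻¹) P₃`. -/
theorem statement2 (n : ℕ) (S S' Si' T' : ℝ → Matrix (Fin n ⊕ Fin n) (Fin n ⊕ Fin n) ℝ)
    (hS : ∀ l, IsSymplectic (S l)) (hd : HasMatDeriv S S')
    (hdi : HasMatDeriv (fun l => (S l)⁻¹) Si')
    (hdp : HasMatDeriv (fun l => P3mat (Fin n) * (S l)⁻¹ * P3mat (Fin n)) T') :
    (∀ l, Psi (fun t => P3mat (Fin n) * (S t)⁻¹ * P3mat (Fin n)) T' l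
        = -(P3mat (Fin n) * Psi (fun t => (S t)⁻¹) Si' l * P3mat (Fin n))) ∧
    ((∀ l, (Psi S S' l).PosSemidef) ↔
      (∀ l, (Psi (fun t => P3mat (Fin n) * (S t)⁻¹ * P3mat (Fin n)) T' l).PosSemidef)) := by
  obtain rfl : T' = fun t => P3mat (Fin n) * Si' t * P3mat (Fin n) :=
    hdp.unique (hdi.const_mul_mul _ _)
  obtain rfl := hd.deriv_inv_eq (fun t => (hS t).isUnit_det) hdi
  refine ⟨Psi_conj_P3mat _ _, forall_congr' fun l => ?_⟩
  have hunit : IsUnit (S l * P3mat (Fin n)) :=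
    ((isUnit_iff_isUnit_det _).mpr (hS l).isUnit_det).mul
      (.of_mul_eq_one _ P3mat_mul_P3mat)
  rw [Psi_P3mat_conj_inv_of_isSymplectic hS, hunit.posSemidef_star_left_conjugate_iff]
end
end

section
/- Let S(λ) be a differentiable family of 2n×2n symplectic matrices and let R, P be fixed (λ-independent) 2n×2n symplectic matrices. Then Ψ(S(λ)) ≥ 0 for all λ if and only if Ψ(R⁻¹ S(λ) P) ≥ 0 for all λ, where Ψ(Z(λ)) := Jᵀ Z'(λ) Z(λ)⁻¹. -/
open Matrix
noncomputable section

lemma Jmat_T_mul {k : Type*} [Fintype k] [DecidableEq k] :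
    (Jmat k)ᵀ * Jmat k = 1 := by
  simp [Jmat, fromBlocks_transpose, fromBlocks_multiply, fromBlocks_one]

lemma Jmat_mul_T {k : Type*} [Fintype k] [DecidableEq k] :
    Jmat k * (Jmat k)ᵀ = 1 := by
  simp [Jmat, fromBlocks_transpose, fromBlocks_multiply, fromBlocks_one]

lemma symp_left_inv {k : Type*} [Fintype k] [DecidableEq k]
    {A : Matrix (k ⊕ k) (k ⊕ k) ℝ} (hA : IsSymplectic A) :
    ((Jmat k)ᵀ * Aᵀ * Jmat k) * A = 1 := by
  have : (Jmat k)ᵀ * (Aᵀ * Jmat k * A) = (Jmat k)ᵀ * Jmat k := by rw [hA]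
  calc ((Jmat k)ᵀ * Aᵀ * Jmat k) * A = (Jmat k)ᵀ * (Aᵀ * Jmat k * A) := by
        simp only [mul_assoc]
    _ = 1 := by rw [hA, Jmat_T_mul]

lemma symp_isUnit_det {k : Type*} [Fintype k] [DecidableEq k]
    {A : Matrix (k ⊕ k) (k ⊕ k) ℝ} (hA : IsSymplectic A) :
    IsUnit A.det :=
  Matrix.isUnit_det_of_left_inverse (symp_left_inv hA)

lemma symp_inv_mul {k : Type*} [Fintype k] [DecidableEq k]
    {A : Matrix (k ⊕ k) (k ⊕ k) ℝ} (hA : IsSymplectic A) :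
    A⁻¹ * A = 1 :=
  Matrix.nonsing_inv_mul A (symp_isUnit_det hA)

lemma symp_mul_inv {k : Type*} [Fintype k] [DecidableEq k]
    {A : Matrix (k ⊕ k) (k ⊕ k) ℝ} (hA : IsSymplectic A) :
    A * A⁻¹ = 1 :=
  Matrix.mul_nonsing_inv A (symp_isUnit_det hA)

/-- `JᵀR⁻¹ = RᵀJᵀ` for symplectic `R`. -/
lemma JT_mul_inv {k : Type*} [Fintype k] [DecidableEq k]
    {R : Matrix (k ⊕ k) (k ⊕ k) ℝ} (hR : IsSymplectic R) :
    (Jmat k)ᵀ * R⁻¹ = Rᵀ * (Jmat k)ᵀ := by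
  have h1 : Rᵀ * Jmat k = Jmat k * R⁻¹ := by
    have := hR
    unfold IsSymplectic at this
    calc Rᵀ * Jmat k = (Rᵀ * Jmat k * R) * R⁻¹ := by
          rw [mul_assoc, symp_mul_inv hR, mul_one]
      _ = Jmat k * R⁻¹ := by rw [this]
  have hJ : (Jmat k)ᵀ = -(Jmat k) := by
    simp [Jmat, fromBlocks_transpose, fromBlocks_neg]
  rw [hJ, neg_mul, mul_neg, ← h1]

/-- Key identity: `Ψ(R⁻¹SP) = Rᵀ Ψ(S) R`. -/
lemma psi_conj {k : Type*} [Fintype k] [DecidableEq k]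
    (S S' : ℝ → Matrix (k ⊕ k) (k ⊕ k) ℝ)
    (R P : Matrix (k ⊕ k) (k ⊕ k) ℝ)
    (hS : ∀ l, IsSymplectic (S l)) (hR : IsSymplectic R) (hP : IsSymplectic P) (l : ℝ) :
    Psi (fun t => R⁻¹ * S t * P) (fun t => R⁻¹ * S' t * P) l
      = Rᵀ * Psi S S' l * R := by
  have hRinv : R⁻¹⁻¹ = R := Matrix.nonsing_inv_nonsing_inv R (symp_isUnit_det hR)
  have hinv : (R⁻¹ * S l * P)⁻¹ = P⁻¹ * (S l)⁻¹ * R := by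
    rw [Matrix.mul_inv_rev, Matrix.mul_inv_rev, hRinv, mul_assoc]
  unfold Psi
  rw [hinv]
  have : (Jmat k)ᵀ * (R⁻¹ * S' l * P) * (P⁻¹ * (S l)⁻¹ * R)
      = ((Jmat k)ᵀ * R⁻¹) * S' l * (P * P⁻¹) * (S l)⁻¹ * R := by
    simp only [mul_assoc]
  rw [this, symp_mul_inv hP, mul_one, JT_mul_inv hR]
  simp only [mul_assoc]

/-- For fixed symplectic `R`, `P`:
`Ψ(S(λ)) ≥ 0` for all `λ` iff `Ψ(R⁻¹ S(λ) P) ≥ 0` for all `λ`. -/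
theorem statement3 (n : ℕ) (S S' : ℝ → Matrix (Fin n ⊕ Fin n) (Fin n ⊕ Fin n) ℝ)
    (R P : Matrix (Fin n ⊕ Fin n) (Fin n ⊕ Fin n) ℝ)
    (hS : ∀ l, IsSymplectic (S l)) (hR : IsSymplectic R) (hP : IsSymplectic P)
    (hd : HasMatDeriv S S') :
    (∀ l, (Psi S S' l).PosSemidef) ↔
      (∀ l, (Psi (fun t => R⁻¹ * S t * P) (fun t => R⁻¹ * S' t * P) l).PosSemidef) := by
  constructor
  · intro h l
    rw [psi_conj S S' R P hS hR hP l]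
    have := (h l).conjTranspose_mul_mul_same R
    simpa [conjTranspose_eq_transpose_of_trivial] using this
  · intro h l
    have key := h l
    rw [psi_conj S S' R P hS hR hP l] at key
    have := key.conjTranspose_mul_mul_same R⁻¹
    have heq : (R⁻¹)ᴴ * (Rᵀ * Psi S S' l * R) * R⁻¹ = Psi S S' l := by
      have h1 : (R⁻¹)ᴴ = (Rᵀ)⁻¹ := by
        simp [conjTranspose_eq_transpose_of_trivial, Matrix.transpose_nonsing_inv]
      have h2 : (Rᵀ)⁻¹ * Rᵀ = 1 := by
        rw [← Matrix.transpose_nonsing_inv, ← Matrix.transpose_mul, symp_mul_inv hR,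
          Matrix.transpose_one]
      rw [h1]
      calc (Rᵀ)⁻¹ * (Rᵀ * Psi S S' l * R) * R⁻¹
          = ((Rᵀ)⁻¹ * Rᵀ) * Psi S S' l * (R * R⁻¹) := by simp only [mul_assoc]
        _ = Psi S S' l := by rw [h2, symp_mul_inv hR, one_mul, mul_one]
    rwa [heq] at this
end
end

section
/- Let Q(λ) be a symmetric n×n matrix family, continuously differentiable with Q'(λ) ≥ 0 on [a,b]. Then rank Q(λ) is piecewise constant on [a,b], the left limit rank Q(λ⁻) exists for each λ ∈ (a,b], and Σ_{a<λ≤b} (rank Q(λ⁻) − rank Q(λ)) = ind Q(a) − ind Q(b), where ind denotes the number of negative eigenvalues. -/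
open Matrix
noncomputable section

open Classical in
/-- The Moore–Penrose pseudoinverse, defined via the four Penrose conditions. -/
def pinv {m k : Type*} [Fintype m] [Fintype k] (A : Matrix m k ℝ) : Matrix k m ℝ :=
  if h : ∃ B : Matrix k m ℝ,
      A * B * A = A ∧ B * A * B = B ∧ (A * B)ᵀ = A * B ∧ (B * A)ᵀ = B * A
  then h.choose else 0

/-- `ind A`: the number of negative eigenvalues (with multiplicity) of a symmetric matrix. -/
def negInd {k : Type*} [Fintype k] [DecidableEq k] (A : Matrix k k ℝ) : ℕ :=
  if h : A.IsHermitian then Fintype.card {i // h.eigenvalues i < 0} else 0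

/-- The Wronskian `w(Y, Ŷ) = Yᵀ J Ŷ`. -/
def wron {k m : Type*} [Fintype k] [Fintype m] [DecidableEq k]
    (Y Yh : Matrix (k ⊕ k) m ℝ) : Matrix m m ℝ :=
  Yᵀ * Jmat k * Yh

/-- The matrix `M = (I − X X†) X̂` from the definition of the comparative index. -/
def compM {k m : Type*} [Fintype k] [Fintype m] [DecidableEq k]
    (Y Yh : Matrix (k ⊕ k) m ℝ) : Matrix k m ℝ :=
  let X := Y.submatrix Sum.inl id
  let Xh := Yh.submatrix Sum.inl id
  Xh - X * pinv X * Xh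

/-- The matrix `D = T w(Y,Ŷ)ᵀ X† X̂ T` (with `T = I − M† M`) from the comparative index. -/
def compD {k m : Type*} [Fintype k] [Fintype m] [DecidableEq k] [DecidableEq m]
    (Y Yh : Matrix (k ⊕ k) m ℝ) : Matrix m m ℝ :=
  let X := Y.submatrix Sum.inl id
  let Xh := Yh.submatrix Sum.inl id
  let T : Matrix m m ℝ := 1 - pinv (compM Y Yh) * compM Y Yh
  T * (wron Y Yh)ᵀ * pinv X * Xh * T

/-- The comparative index `μ(Y, Ŷ) = rank M + ind D`. -/
def compIdx {k m : Type*} [Fintype k] [Fintype m] [DecidableEq k] [DecidableEq m]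
    (Y Yh : Matrix (k ⊕ k) m ℝ) : ℕ :=
  (compM Y Yh).rank + negInd (compD Y Yh)

/-- The dual comparative index `μ*(Y, Ŷ) = rank M + ind (−D)`. -/
def dualCompIdx {k m : Type*} [Fintype k] [Fintype m] [DecidableEq k] [DecidableEq m]
    (Y Yh : Matrix (k ⊕ k) m ℝ) : ℕ :=
  (compM Y Yh).rank + negInd (-(compD Y Yh))

/-- A `2n×n` matrix `Y = (X; U)` is a conjoined basis: `rank Y = n` and `Xᵀ U` symmetric. -/
def IsConjoinedBasis {k m : Type*} [Fintype k] [Fintype m] [DecidableEq k]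
    (Y : Matrix (k ⊕ k) m ℝ) : Prop :=
  Y.rank = Fintype.card m ∧ ((Y.submatrix Sum.inl id)ᵀ * Y.submatrix Sum.inr id).IsSymm

open Classical in
/-- The left-hand limit value of an `ℕ`-valued function at `x`
(defaulting to `f x` if the left limit does not exist). -/
def leftVal (f : ℝ → ℕ) (x : ℝ) : ℕ :=
  if h : ∃ r, ∀ᶠ t in nhdsWithin x (Set.Iio x), f t = r then h.choose else f x

/-- The jump `f(x⁻) − f(x)` at `x`, as an integer. -/
def jmp (f : ℝ → ℕ) (x : ℝ) : ℤ := (leftVal f x : ℤ) - (f x : ℤ)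

/-!
Because `Q' ≥ 0`, every quadratic form `t ↦ xᵀ Q(t) x` is nondecreasing on `[a, b]`. By Sylvester's
law of inertia the negative index `ν(t)` and the positive index `π(t)` of `Q(t)` are the maximal
dimensions of subspaces on which the form is negative, resp. positive, definite; so `ν` is
nonincreasing and `π` nondecreasing. Both are lower semicontinuous, since a definite subspace stays
definite under small perturbations (compactness of its unit sphere). Hence `π` is left-continuous
and `ν` right-continuous, so `rank Q = ν + π` jumps at `λ` by exactly `ν(λ⁻) − ν(λ)`, and these
finitely many downward jumps of `ν` add up to `ν(a) − ν(b)`.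
-/

open Filter Topology QuadraticMap

namespace QuadraticForm

section Order
variable {R M : Type*} [CommRing R] [LinearOrder R] [StrongRankCondition R]
  [AddCommGroup M] [Module R M] [Module.Finite R M] {Q Q' : QuadraticForm R M}

lemma sigPos_mono (h : ∀ x, Q x ≤ Q' x) : sigPos Q ≤ sigPos Q' := by
  obtain ⟨V, hV, hpos⟩ := exists_finrank_eq_sigPos_and_posDef Q
  exact hV ▸ le_sigPos_of_posDef Q' fun x hx => (hpos x hx).trans_le (h x)

lemma sigNeg_anti [IsOrderedRing R] (h : ∀ x, Q x ≤ Q' x) : sigNeg Q' ≤ sigNeg Q :=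
  sigPos_mono (Q := -Q') (Q' := -Q) fun x => neg_le_neg (h x)

end Order

section Topology
variable {X E : Type*} [TopologicalSpace X] [NormedAddCommGroup E] [NormedSpace ℝ E]
  [FiniteDimensional ℝ E] {q : X → QuadraticForm ℝ E}

lemma eventually_sigPos_le (hq : Continuous fun p : X × E => q p.1 p.2) (x₀ : X) :
    ∀ᶠ x in 𝓝 x₀, sigPos (q x₀) ≤ sigPos (q x) := by
  obtain ⟨V, hV, hpos⟩ := exists_finrank_eq_sigPos_and_posDef (q x₀)
  have hK : IsCompact ((V : Set E) ∩ Metric.sphere 0 1) :=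
    (isCompact_sphere 0 1).inter_left V.closed_of_finiteDimensional
  have hK_pos : ∀ᶠ x in 𝓝 x₀, ∀ v ∈ (V : Set E) ∩ Metric.sphere 0 1, 0 < q x v := by
    refine hK.eventually_forall_of_forall_eventually fun v hv => ?_
    have hv0 : (⟨v, hv.1⟩ : V) ≠ 0 := by
      simpa [← Subtype.coe_ne_coe] using ne_zero_of_mem_sphere one_ne_zero ⟨v, hv.2⟩
    exact continuousAt_const.eventually_lt hq.continuousAt (hpos _ hv0)
  filter_upwards [hK_pos] with x hx
  refine hV ▸ le_sigPos_of_posDef (q x) fun v hv => ?_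
  have hv' : (v : E) ≠ 0 := by simpa using hv
  have hnorm : 0 < ‖(v : E)‖ := norm_pos_iff.2 hv'
  have hu := hx (‖(v : E)‖⁻¹ • (v : E))
    ⟨V.smul_mem _ v.2, by simp [norm_smul, hnorm.ne']⟩
  rw [QuadraticMap.map_smul, smul_eq_mul] at hu
  simpa using (pos_of_mul_pos_right hu (by positivity) : 0 < q x v)

lemma eventually_sigNeg_le (hq : Continuous fun p : X × E => q p.1 p.2) (x₀ : X) :
    ∀ᶠ x in 𝓝 x₀, sigNeg (q x₀) ≤ sigNeg (q x) :=
  eventually_sigPos_le (q := fun x => -q x) hq.neg x₀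

end Topology

end QuadraticForm

open QuadraticForm

namespace Matrix

lemma toQuadraticForm'_apply {R ι : Type*} [CommRing R] [Fintype ι] [DecidableEq ι]
    (A : Matrix ι ι R) (x : ι → R) : A.toQuadraticForm' x = x ⬝ᵥ A *ᵥ x :=
  toLinearMap₂'_apply' A x x

namespace IsHermitian
variable {ι : Type*} [Fintype ι] [DecidableEq ι] {A : Matrix ι ι ℝ}

lemma repr_toEuclideanLin (hA : A.IsHermitian) (x : EuclideanSpace ℝ ι) (i : ι) :
    hA.eigenvectorBasis.repr (toEuclideanLin A x) i =
      hA.eigenvalues i * hA.eigenvectorBasis.repr x i := by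
  have hv : toEuclideanLin A (hA.eigenvectorBasis i) =
      hA.eigenvalues i • hA.eigenvectorBasis i := by
    apply WithLp.ofLp_injective
    simpa using hA.mulVec_eigenvectorBasis i
  rw [OrthonormalBasis.repr_apply_apply, OrthonormalBasis.repr_apply_apply,
    ← isSymmetric_toEuclideanLin_iff.mpr hA, hv, real_inner_smul_left]

def isometryEquivWeightedSumSquares (hA : A.IsHermitian) :
    A.toQuadraticForm'.IsometryEquiv (weightedSumSquares ℝ hA.eigenvalues) where
  toLinearEquiv := (WithLp.linearEquiv 2 ℝ (ι → ℝ)).symm ≪≫ₗ hA.eigenvectorBasis.toBasis.equivFun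
  map_app' x := by
    have h := hA.eigenvectorBasis.repr.inner_map_map (WithLp.toLp 2 x)
      (toEuclideanLin A (WithLp.toLp 2 x))
    simp only [PiLp.inner_apply, RCLike.inner_apply, conj_trivial] at h
    rw [toQuadraticForm'_apply, weightedSumSquares_apply, dotProduct_comm]
    refine Eq.trans (Finset.sum_congr rfl fun i _ => ?_) (h.trans rfl)
    rw [repr_toEuclideanLin, smul_eq_mul, ← mul_assoc]
    rfl

lemma equivalent_weightedSumSquares (hA : A.IsHermitian) :
    A.toQuadraticForm'.Equivalent (weightedSumSquares ℝ hA.eigenvalues) :=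
  ⟨hA.isometryEquivWeightedSumSquares⟩

lemma negInd_eq_sigNeg (hA : A.IsHermitian) : negInd A = sigNeg A.toQuadraticForm' := by
  rw [sigNeg_of_equiv_weightedSumSquares hA.equivalent_weightedSumSquares, negInd, dif_pos hA,
    ← Nat.card_eq_fintype_card, ← Nat.card_coe_set_eq]
  rfl

lemma sigPos_eq_card (hA : A.IsHermitian) :
    sigPos A.toQuadraticForm' = Fintype.card {i // 0 < hA.eigenvalues i} := by
  rw [sigPos_of_equiv_weightedSumSquares hA.equivalent_weightedSumSquares,
    ← Nat.card_eq_fintype_card, ← Nat.card_coe_set_eq]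
  rfl

lemma rank_eq_sigPos_add_sigNeg (hA : A.IsHermitian) :
    A.rank = sigPos A.toQuadraticForm' + sigNeg A.toQuadraticForm' := by
  classical
  rw [hA.rank_eq_card_non_zero_eigs, ← hA.negInd_eq_sigNeg, negInd, dif_pos hA, hA.sigPos_eq_card,
    Fintype.card_subtype, Fintype.card_subtype, Fintype.card_subtype,
    ← Finset.card_union_of_disjoint (Finset.disjoint_filter.2 fun i _ h h' => lt_asymm h h')]
  congr 1
  ext i
  simp only [Finset.mem_filter, Finset.mem_union, Finset.mem_univ, true_and]
  exact ne_iff_lt_or_gt.trans or_comm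

end IsHermitian
end Matrix

open Set

section NatValued
variable {f : ℝ → ℕ} {a b l : ℝ}

lemma leftVal_eq_of_eventually {m : ℕ} (h : ∀ᶠ t in 𝓝[<] l, f t = m) : leftVal f l = m := by
  have hex : ∃ r, ∀ᶠ t in 𝓝[<] l, f t = r := ⟨m, h⟩
  rw [leftVal, dif_pos hex]
  obtain ⟨t, ht, ht'⟩ := (hex.choose_spec.and h).exists
  exact ht.symm.trans ht'

lemma AntitoneOn.exists_eventually_eq_nhdsLT (hf : AntitoneOn f (Ioo a l)) (hal : a < l) :
    ∃ r, ∀ᶠ t in 𝓝[<] l, f t = r := by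
  obtain ⟨t₀, ht₀, hmin⟩ := Nat.sInf_mem ((nonempty_Ioo.2 hal).image f)
  refine ⟨f t₀, eventually_of_mem (Ioo_mem_nhdsLT ht₀.2) fun t ht => ?_⟩
  have ht' : t ∈ Ioo a l := ⟨ht₀.1.trans ht.1, ht.2⟩
  exact le_antisymm (hf ht₀ ht' ht.1.le) (hmin ▸ Nat.sInf_le (mem_image_of_mem f ht'))

lemma AntitoneOn.eventually_eq_nhdsGT (hf : AntitoneOn f (Icc a b)) (hl : l ∈ Ico a b)
    (hlsc : ∀ᶠ t in 𝓝[Icc a b] l, f l ≤ f t) : ∀ᶠ t in 𝓝[>] l, f t = f l := by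
  have hsub : Ioc l b ⊆ Icc a b := Ioc_subset_Icc_self.trans (Icc_subset_Icc_left hl.1)
  rw [← nhdsWithin_Ioc_eq_nhdsGT hl.2]
  filter_upwards [nhdsWithin_mono l hsub hlsc, self_mem_nhdsWithin] with t ht htl
  exact le_antisymm (hf (Ico_subset_Icc_self hl) (hsub htl) htl.1.le) ht

lemma MonotoneOn.eventually_eq_nhdsLT (hf : MonotoneOn f (Icc a b)) (hl : l ∈ Ioc a b)
    (hlsc : ∀ᶠ t in 𝓝[Icc a b] l, f l ≤ f t) : ∀ᶠ t in 𝓝[<] l, f t = f l := by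
  have hsub : Ico a l ⊆ Icc a b := Ico_subset_Icc_self.trans (Icc_subset_Icc_right hl.2)
  rw [← nhdsWithin_Ico_eq_nhdsLT hl.1]
  filter_upwards [nhdsWithin_mono l hsub hlsc, self_mem_nhdsWithin] with t ht htl
  exact le_antisymm (hf (hsub htl) (Ioc_subset_Icc_self hl) htl.2.le) ht

lemma jmp_eq_zero_of_eqOn (hal : a < l) (h : ∀ t ∈ Ioc a l, f t = f l) : jmp f l = 0 := by
  rw [jmp, leftVal_eq_of_eventually (eventually_of_mem (Ioo_mem_nhdsLT hal)
    fun t ht => h t (Ioo_subset_Ioc_self ht)), sub_self]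

lemma AntitoneOn.exists_first_drop (hf : AntitoneOn f (Icc a b)) (hab : a ≤ b)
    (hright : ∀ l ∈ Ico a b, ∀ᶠ t in 𝓝[>] l, f t = f l) (hlt : f b < f a) :
    ∃ c ∈ Ioc a b, (∀ t ∈ Ico a c, f t = f a) ∧ f c < f a := by
  set T := {t ∈ Icc a b | f t < f a}
  have hbT : b ∈ T := ⟨right_mem_Icc.2 hab, hlt⟩
  obtain ⟨c, hc⟩ : ∃ c, IsGLB T c := ⟨sInf T, isGLB_csInf ⟨b, hbT⟩ ⟨a, fun t ht => ht.1.1⟩⟩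
  have hac : a ≤ c := hc.2 fun t ht => ht.1.1
  have hcb : c ≤ b := hc.1 hbT
  have hconst : ∀ t ∈ Ico a c, f t = f a := fun t ht =>
    le_antisymm (hf (left_mem_Icc.2 hab) ⟨ht.1, ht.2.le.trans hcb⟩ ht.1)
      (not_lt.1 fun h => ht.2.not_ge (hc.1 ⟨⟨ht.1, ht.2.le.trans hcb⟩, h⟩))
  have hdrop : f c < f a := by
    by_contra! hca
    have hcb' : c < b := hcb.lt_of_ne fun h => by rw [h] at hca; omega
    obtain ⟨u, hcu, hu⟩ := mem_nhdsGT_iff_exists_Ioo_subset.1 (hright c ⟨hac, hcb'⟩)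
    obtain ⟨t, ⟨-, htT⟩, hct, htu⟩ := hc.exists_between hcu
    have hct' : c ≠ t := fun h => by rw [← h] at htT; omega
    have hft : f t = f c := hu ⟨hct.lt_of_ne hct', htu⟩
    omega
  exact ⟨c, ⟨hac.lt_of_ne fun h => by rw [← h] at hdrop; omega, hcb⟩, hconst, hdrop⟩

theorem AntitoneOn.finite_support_jmp_and_finsum (hf : AntitoneOn f (Icc a b)) (hab : a ≤ b)
    (hright : ∀ l ∈ Ico a b, ∀ᶠ t in 𝓝[>] l, f t = f l) :
    (Ioc a b ∩ Function.support (jmp f)).Finite ∧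
      ∑ᶠ x ∈ Ioc a b, jmp f x = (f a : ℤ) - f b := by
  induction hN : f a using Nat.strong_induction_on generalizing a with
  | _ N ih =>
  subst hN
  rcases (hf (left_mem_Icc.2 hab) (right_mem_Icc.2 hab) hab).eq_or_lt with heq | hlt
  · have hzero : ∀ x ∈ Ioc a b, jmp f x = 0 := fun x hx => by
      have hfa : ∀ t ∈ Icc a x, f t = f a := fun t ht =>
        le_antisymm (hf (left_mem_Icc.2 hab) ⟨ht.1, ht.2.trans hx.2⟩ ht.1)
          (heq ▸ hf ⟨ht.1, ht.2.trans hx.2⟩ (right_mem_Icc.2 hab) (ht.2.trans hx.2))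
      exact jmp_eq_zero_of_eqOn hx.1 fun t ht =>
        (hfa t (Ioc_subset_Icc_self ht)).trans (hfa x (right_mem_Icc.2 hx.1.le)).symm
    refine ⟨(finite_empty).subset fun x hx => hx.2 (hzero x hx.1), ?_⟩
    rw [finsum_mem_eq_zero_of_forall_eq_zero hzero, heq, sub_self]
  · obtain ⟨c, hc, hconst, hdrop⟩ := hf.exists_first_drop hab hright hlt
    obtain ⟨hfin, hsum⟩ := ih (f c) hdrop (hf.mono (Icc_subset_Icc_left hc.1.le)) hc.2
      (fun l hl => hright l ⟨hc.1.le.trans hl.1, hl.2⟩) rfl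
    have hzero : ∀ x ∈ Ioo a c, jmp f x = 0 := fun x hx =>
      jmp_eq_zero_of_eqOn hx.1 fun t ht =>
        (hconst t ⟨ht.1.le, ht.2.trans_lt hx.2⟩).trans (hconst x ⟨hx.1.le, hx.2⟩).symm
    have hjc : jmp f c = (f a : ℤ) - f c := by
      rw [jmp, leftVal_eq_of_eventually (eventually_of_mem (Ioo_mem_nhdsLT hc.1)
        fun t ht => hconst t ⟨ht.1.le, ht.2⟩)]
    have hfin₀ : (Ioo a c ∩ Function.support (jmp f)).Finite :=
      finite_empty.subset fun x hx => hx.2 (hzero x hx.1)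
    have hleft : ∑ᶠ x ∈ Ioc a c, jmp f x = (f a : ℤ) - f c := by
      rw [← Ioo_insert_right hc.1, finsum_mem_insert' _ (fun h => lt_irrefl c h.2) hfin₀,
        finsum_mem_eq_zero_of_forall_eq_zero hzero, hjc, add_zero]
    have hfin_left : (Ioc a c ∩ Function.support (jmp f)).Finite := by
      rw [← Ioo_insert_right hc.1]
      exact (hfin₀.insert c).subset fun x ⟨hx, hx'⟩ => hx.imp_right fun h => ⟨h, hx'⟩
    rw [← Ioc_union_Ioc_eq_Ioc hc.1.le hc.2, union_inter_distrib_right,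
      finsum_mem_union' (Ioc_disjoint_Ioc_of_le le_rfl) hfin_left hfin, hleft, hsum]
    exact ⟨hfin_left.union hfin, by ring⟩

end NatValued

theorem finsum_jmp_of_antitone_add_monotone {a b : ℝ} {f g ρ : ℝ → ℕ} (hab : a ≤ b)
    (hf : AntitoneOn f (Icc a b)) (hg : MonotoneOn g (Icc a b))
    (hf_lsc : ∀ l ∈ Icc a b, ∀ᶠ t in 𝓝[Icc a b] l, f l ≤ f t)
    (hg_lsc : ∀ l ∈ Icc a b, ∀ᶠ t in 𝓝[Icc a b] l, g l ≤ g t)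
    (hρ : ∀ t ∈ Icc a b, ρ t = f t + g t) :
    (∀ l ∈ Ioc a b, ∃ r, ∀ᶠ t in 𝓝[<] l, ρ t = r) ∧
      {x ∈ Ioc a b | jmp ρ x ≠ 0}.Finite ∧
      ∑ᶠ x ∈ Ioc a b, jmp ρ x = (f a : ℤ) - f b := by
  have hleft : ∀ l ∈ Ioc a b, ∃ r, (∀ᶠ t in 𝓝[<] l, ρ t = r) ∧ jmp ρ l = jmp f l := by
    intro l hl
    obtain ⟨r, hr⟩ := (hf.mono fun t ht => ⟨ht.1.le, ht.2.le.trans hl.2⟩ :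
      AntitoneOn f (Ioo a l)).exists_eventually_eq_nhdsLT hl.1
    have hρr : ∀ᶠ t in 𝓝[<] l, ρ t = r + g l := by
      filter_upwards [hr, hg.eventually_eq_nhdsLT hl (hg_lsc l (Ioc_subset_Icc_self hl)),
        Ioo_mem_nhdsLT hl.1] with t hft hgt ht
      rw [hρ t ⟨ht.1.le, ht.2.le.trans hl.2⟩, hft, hgt]
    refine ⟨_, hρr, ?_⟩
    rw [jmp, jmp, leftVal_eq_of_eventually hρr, leftVal_eq_of_eventually hr,
      hρ l (Ioc_subset_Icc_self hl)]
    push_cast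
    ring
  have hjmp : ∀ x ∈ Ioc a b, jmp ρ x = jmp f x := fun x hx => by
    obtain ⟨_, -, h⟩ := hleft x hx
    exact h
  obtain ⟨hfin, hsum⟩ := hf.finite_support_jmp_and_finsum hab fun l hl =>
    hf.eventually_eq_nhdsGT hl (hf_lsc l (Ico_subset_Icc_self hl))
  refine ⟨fun l hl => (hleft l hl).imp fun _ h => h.1, ?_, ?_⟩
  · exact hfin.subset fun x hx => ⟨hx.1, by rw [Function.mem_support, ← hjmp x hx.1]; exact hx.2⟩
  · rw [finsum_mem_congr rfl hjmp, hsum]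

section MatrixFamily
variable {ι : Type*} [Fintype ι] [DecidableEq ι]

lemma Matrix.continuous_toQuadraticForm' :
    Continuous fun p : Matrix ι ι ℝ × (ι → ℝ) => p.1.toQuadraticForm' p.2 := by
  simp only [toQuadraticForm'_apply]
  fun_prop

lemma Matrix.eventually_sigNeg_toQuadraticForm'_le (A : Matrix ι ι ℝ) :
    ∀ᶠ B in 𝓝 A, sigNeg A.toQuadraticForm' ≤ sigNeg B.toQuadraticForm' :=
  eventually_sigNeg_le (q := fun B : Matrix ι ι ℝ => B.toQuadraticForm')
    continuous_toQuadraticForm' A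

lemma Matrix.eventually_sigPos_toQuadraticForm'_le (A : Matrix ι ι ℝ) :
    ∀ᶠ B in 𝓝 A, sigPos A.toQuadraticForm' ≤ sigPos B.toQuadraticForm' :=
  eventually_sigPos_le (q := fun B : Matrix ι ι ℝ => B.toQuadraticForm')
    continuous_toQuadraticForm' A

lemma monotoneOn_toQuadraticForm' {D : Set ℝ} (hD : Convex ℝ D) {Q Q' : ℝ → Matrix ι ι ℝ}
    (hd : ∀ l ∈ D, ∀ i j, HasDerivWithinAt (fun t => Q t i j) (Q' l i j) D l)
    (hpos : ∀ l ∈ D, (Q' l).PosSemidef) (x : ι → ℝ) :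
    MonotoneOn (fun t => (Q t).toQuadraticForm' x) D := by
  have hderiv : ∀ l ∈ D, HasDerivWithinAt (fun t => (Q t).toQuadraticForm' x)
      ((Q' l).toQuadraticForm' x) D l := fun l hl => by
    simp only [toQuadraticForm'_apply, dotProduct, mulVec]
    exact HasDerivWithinAt.fun_sum fun i _ => (HasDerivWithinAt.fun_sum fun j _ =>
      (hd l hl i j).mul_const (x j)).const_mul (x i)
  refine monotoneOn_of_hasDerivWithinAt_nonneg hD (fun t ht => (hderiv t ht).continuousWithinAt)
    (fun t ht => (hderiv t (interior_subset ht)).mono interior_subset) fun t ht => ?_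
  simpa [toQuadraticForm'_apply] using
    (posSemidef_iff_dotProduct_mulVec.1 (hpos t (interior_subset ht))).2 x

end MatrixFamily

/-- For a C¹ family of symmetric matrices with `Q'(λ) ≥ 0` on `[a,b]`,
the rank is piecewise constant (jumps occur at finitely many points), left limits of the
rank exist, and `Σ_{a<λ≤b} (rank Q(λ⁻) − rank Q(λ)) = ind Q(a) − ind Q(b)`. -/
theorem statement12 (n : ℕ) (a b : ℝ) (hab : a ≤ b)
    (Q Q' : ℝ → Matrix (Fin n) (Fin n) ℝ)
    (hsymm : ∀ l ∈ Set.Icc a b, (Q l).IsSymm)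
    (hd : ∀ l ∈ Set.Icc a b, ∀ i j,
      HasDerivWithinAt (fun t => Q t i j) (Q' l i j) (Set.Icc a b) l)
    (hpos : ∀ l ∈ Set.Icc a b, (Q' l).PosSemidef) :
    (∀ l ∈ Set.Ioc a b, ∃ r, ∀ᶠ t in nhdsWithin l (Set.Iio l), (Q t).rank = r) ∧
    {x ∈ Set.Ioc a b | jmp (fun t => (Q t).rank) x ≠ 0}.Finite ∧
    (∑ᶠ x ∈ Set.Ioc a b, jmp (fun t => (Q t).rank) x)
      = (negInd (Q a) : ℤ) - (negInd (Q b) : ℤ) := by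
  have hherm : ∀ t ∈ Icc a b, (Q t).IsHermitian := fun t ht =>
    isHermitian_iff_isSymm.2 (hsymm t ht)
  have hmono := monotoneOn_toQuadraticForm' (convex_Icc a b) hd hpos
  have hcont : ∀ l ∈ Icc a b, Tendsto Q (𝓝[Icc a b] l) (𝓝 (Q l)) := fun l hl =>
    continuousWithinAt_pi.2 fun i => continuousWithinAt_pi.2 fun j =>
      (hd l hl i j).continuousWithinAt
  have hν : ∀ l ∈ Icc a b, ∀ᶠ t in 𝓝[Icc a b] l,
      sigNeg (Q l).toQuadraticForm' ≤ sigNeg (Q t).toQuadraticForm' := fun l hl =>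
    (hcont l hl).eventually (Q l).eventually_sigNeg_toQuadraticForm'_le
  have hπ : ∀ l ∈ Icc a b, ∀ᶠ t in 𝓝[Icc a b] l,
      sigPos (Q l).toQuadraticForm' ≤ sigPos (Q t).toQuadraticForm' := fun l hl =>
    (hcont l hl).eventually (Q l).eventually_sigPos_toQuadraticForm'_le
  rw [(hherm a (left_mem_Icc.2 hab)).negInd_eq_sigNeg,
    (hherm b (right_mem_Icc.2 hab)).negInd_eq_sigNeg]
  exact finsum_jmp_of_antitone_add_monotone hab
    (fun s hs t ht hst => sigNeg_anti fun x => hmono x hs ht hst)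
    (fun s hs t ht hst => sigPos_mono fun x => hmono x hs ht hst) hν hπ
    (fun t ht => ((hherm t ht).rank_eq_sigPos_add_sigNeg).trans (add_comm _ _))
end
end

section
/- For two 2n×2n symplectic matrices S and Ŝ, the rank of the Wronskian of the 4n×2n matrices ⟨Ŝ⟩ and ⟨S⟩ equals rank(Ŝ − S): rank(⟨Ŝ⟩ᵀ J₄ₙ ⟨S⟩) = rank(Ŝ − S), where J₄ₙ = [[0, I₂ₙ], [−I₂ₙ, 0]]. -/
open Matrix
noncomputable section

/-- The `4n×2n` matrix `⟨S⟩` with upper block `𝒳 = (I 0; A B)` and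
lower block `𝒰 = (0 −I; C D)`, for `S = (A B; C D)`. -/
def angleMat {k : Type*} [Fintype k] [DecidableEq k]
    (S : Matrix (k ⊕ k) (k ⊕ k) ℝ) : Matrix ((k ⊕ k) ⊕ (k ⊕ k)) (k ⊕ k) ℝ :=
  fromRows (fromBlocks 1 0 S.toBlocks₁₁ S.toBlocks₁₂)
           (fromBlocks 0 (-1) S.toBlocks₂₁ S.toBlocks₂₂)

/-! The Wronskian of ⟨Ŝ⟩ and ⟨S⟩ is `Ŝᵀ J S - J`. Since `Ŝ` is symplectic, `J = Ŝᵀ J Ŝ`, so the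
Wronskian factors as `Ŝᵀ J (S - Ŝ)` with `Ŝᵀ J` invertible, and invertible factors do not change
the rank. -/

theorem fromRows_transpose_mul_Jmat_mul_fromRows {k m : Type*} [Fintype k] [DecidableEq k]
    (X U X' U' : Matrix k m ℝ) :
    (fromRows X' U')ᵀ * Jmat k * fromRows X U = X'ᵀ * U - U'ᵀ * X := by
  rw [transpose_fromRows, Jmat, fromCols_mul_fromBlocks, fromCols_mul_fromRows]
  simp only [Matrix.mul_zero, Matrix.mul_one, Matrix.mul_neg, Matrix.neg_mul, zero_add, add_zero]
  abel

theorem angleMat_fromBlocks {k : Type*} [Fintype k] [DecidableEq k]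
    (A B C D : Matrix k k ℝ) :
    angleMat (fromBlocks A B C D) = fromRows (fromBlocks 1 0 A B) (fromBlocks 0 (-1) C D) := by
  simp only [angleMat, toBlocks_fromBlocks₁₁, toBlocks_fromBlocks₁₂, toBlocks_fromBlocks₂₁,
    toBlocks_fromBlocks₂₂]

theorem angleMat_transpose_mul_Jmat_mul_angleMat {k : Type*} [Fintype k] [DecidableEq k]
    (S Sh : Matrix (k ⊕ k) (k ⊕ k) ℝ) :
    (angleMat Sh)ᵀ * Jmat (k ⊕ k) * angleMat S = Shᵀ * Jmat k * S - Jmat k := by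
  rw [← fromBlocks_toBlocks S, ← fromBlocks_toBlocks Sh, angleMat_fromBlocks, angleMat_fromBlocks,
    fromRows_transpose_mul_Jmat_mul_fromRows, Jmat]
  simp only [sub_eq_add_neg, fromBlocks_transpose, fromBlocks_multiply, fromBlocks_neg,
    fromBlocks_add, transpose_one, transpose_zero, transpose_neg, Matrix.mul_zero,
    Matrix.mul_one, Matrix.mul_neg]
  congr 1 <;> noncomm_ring

theorem Jmat_mul_neg_Jmat (k : Type*) [Fintype k] [DecidableEq k] :
    Jmat k * -Jmat k = 1 := by
  simp [Jmat, fromBlocks_neg, fromBlocks_multiply, ← fromBlocks_one]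

theorem IsSymplectic.isUnit_det_transpose_mul_Jmat {k : Type*} [Fintype k] [DecidableEq k]
    {S : Matrix (k ⊕ k) (k ⊕ k) ℝ} (hS : IsSymplectic S) : IsUnit (Sᵀ * Jmat k).det := by
  have hJ : (Jmat k).det ≠ 0 := (isUnit_det_of_right_inverse (Jmat_mul_neg_Jmat k)).ne_zero
  refine isUnit_iff_ne_zero.2 fun h0 => hJ ?_
  rw [← hS, det_mul, h0, zero_mul]

theorem Matrix.rank_neg {m n R : Type*} [Fintype m] [Fintype n] [DecidableEq m] [CommRing R]
    (A : Matrix m n R) : (-A).rank = A.rank := by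
  have hdet : IsUnit (-1 : Matrix m m R).det := by
    rw [det_neg, det_one, mul_one]
    exact isUnit_one.neg.pow _
  rw [← rank_mul_eq_right_of_isUnit_det _ A hdet, Matrix.neg_mul, Matrix.one_mul]

theorem statement17_general (n : ℕ) (S Sh : Matrix (Fin n ⊕ Fin n) (Fin n ⊕ Fin n) ℝ)
    (hSh : IsSymplectic Sh) :
    ((angleMat Sh)ᵀ * Jmat (Fin n ⊕ Fin n) * angleMat S).rank = (Sh - S).rank := by
  have hW : (angleMat Sh)ᵀ * Jmat (Fin n ⊕ Fin n) * angleMat S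
      = Shᵀ * Jmat (Fin n) * -(Sh - S) := by
    rw [angleMat_transpose_mul_Jmat_mul_angleMat, neg_sub, Matrix.mul_sub, hSh]
  rw [hW, rank_mul_eq_right_of_isUnit_det _ _ hSh.isUnit_det_transpose_mul_Jmat, rank_neg]

/-- `rank(⟨Ŝ⟩ᵀ J₄ₙ ⟨S⟩) = rank(Ŝ − S)` for symplectic `S`, `Ŝ`. -/
theorem statement17 (n : ℕ) (S Sh : Matrix (Fin n ⊕ Fin n) (Fin n ⊕ Fin n) ℝ)
    (hS : IsSymplectic S) (hSh : IsSymplectic Sh) :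
    ((angleMat Sh)ᵀ * Jmat (Fin n ⊕ Fin n) * angleMat S).rank = (Sh - S).rank :=
  statement17_general n S Sh hSh
end
end
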